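/- arXiv:2303.07185 — 5 statements merged into one kernel-verified Lean document; each statement's English description precedes it below -/
import Mathlib

section
/- Theorem 1 (necessity of action-stamped common belief for joint behavior): If the property JB_S holds in a model M (i.e., for every point (r,n) and every agent i ∈ S(r,n), if ACTING_{i,S} holds at (r,n) then (M,r,n) ⊨ B_i χ_S), then (M,r,n) ⊨ C^a_S χ_S for all points (r,n). -/
/- A point is a pair (r, n) : Run × ℕ.  `B i` is agent `i`'s belief relation
on points; `(M,r,n) ⊨ B_i φ` iff `φ` holds at all points `B i`-related to `(r,n)`. -/
def satB {Run Agent : Type} (B : Agent → Run × ℕ → Run × ℕ → Prop) (i : Agent)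
    (φ : Run × ℕ → Prop) (p : Run × ℕ) : Prop :=
  ∀ q, B i p q → φ q

/- Action-stamped "everyone believes": for all times n' and agents i ∈ S(r,n')
with ACTING_{i,S} at (r,n'), agent i believes φ at (r,n'). -/
def Ea {Run Agent : Type} (S : Run → ℕ → Set Agent) (ACT : Agent → Run → ℕ → Prop)
    (B : Agent → Run × ℕ → Run × ℕ → Prop)
    (φ : Run × ℕ → Prop) : Run × ℕ → Prop :=
  fun p => ∀ (n' : ℕ) (i : Agent), i ∈ S p.1 n' → ACT i p.1 n' → satB B i φ (p.1, n')

/- `EaIter S ACT B k φ` is `E^{a,k}_S φ` (with `EaIter ... 0 φ = φ`). -/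
def EaIter {Run Agent : Type} (S : Run → ℕ → Set Agent) (ACT : Agent → Run → ℕ → Prop)
    (B : Agent → Run × ℕ → Run × ℕ → Prop) :
    ℕ → (Run × ℕ → Prop) → (Run × ℕ → Prop)
  | 0, φ => φ
  | k + 1, φ => Ea S ACT B (EaIter S ACT B k φ)

/- Action-stamped common belief: `E^{a,k}_S φ` holds for all k ≥ 1. -/
def Ca {Run Agent : Type} (S : Run → ℕ → Set Agent) (ACT : Agent → Run → ℕ → Prop)
    (B : Agent → Run × ℕ → Run × ℕ → Prop)
    (φ : Run × ℕ → Prop) (p : Run × ℕ) : Prop :=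
  ∀ k : ℕ, 1 ≤ k → EaIter S ACT B k φ p

/- χ_S: at (r,n), for all n' and all agents i ∈ S(r,n'), if SHOULD_ACT_{i,S}
holds at (r,n') then ACTING_{i,S} holds at (r,n'). -/
def chiS {Run Agent : Type} (S : Run → ℕ → Set Agent)
    (ACT SHOULD : Agent → Run → ℕ → Prop) : Run × ℕ → Prop :=
  fun p => ∀ (n' : ℕ) (i : Agent), i ∈ S p.1 n' → SHOULD i p.1 n' → ACT i p.1 n'

/- JB_S: for all points (r,n) and agents i ∈ S(r,n), if ACTING_{i,S} holds at
(r,n) then agent i believes χ_S at (r,n). -/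
def JB {Run Agent : Type} (S : Run → ℕ → Set Agent)
    (ACT SHOULD : Agent → Run → ℕ → Prop)
    (B : Agent → Run × ℕ → Run × ℕ → Prop) : Prop :=
  ∀ (r : Run) (n : ℕ) (i : Agent), i ∈ S r n → ACT i r n →
    satB B i (chiS S ACT SHOULD) (r, n)

/-- Theorem 1 (necessity): if JB_S holds in M, then action-stamped common
belief of χ_S holds at all points. -/
theorem necessity_of_action_stamped_common_belief
    {Run Agent : Type} (S : Run → ℕ → Set Agent)
    (ACT SHOULD : Agent → Run → ℕ → Prop)
    (B : Agent → Run × ℕ → Run × ℕ → Prop)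
    (h : JB S ACT SHOULD B) :
    ∀ (r : Run) (n : ℕ), Ca S ACT B (chiS S ACT SHOULD) (r, n) := by
  have main : ∀ k, 1 ≤ k → ∀ p : Run × ℕ, EaIter S ACT B k (chiS S ACT SHOULD) p := by
    intro k
    induction k with
    | zero => intro hk; omega
    | succ k ih =>
      intro _ p
      cases Nat.eq_or_lt_of_le (Nat.zero_le k) with
      | inl h0 =>
        subst h0
        intro n' i hi hact q hq
        exact h p.1 n' i hi hact q hq
      | inr hk =>
        intro n' i hi hact q hq
        exact ih hk q
  intro r n k hk
  exact main k hk (r, n)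
end

section
/- Theorem 3 (general necessity): For any formula (set of points) φ, if (M,r,n) ⊨ ACTING_{i,S} → B_i φ for all points (r,n) and all agents i ∈ S(r,n), then (M,r,n) ⊨ C^a_S φ for all points (r,n). -/
/-- Theorem 3 (general necessity): for any formula φ, if every agent in
S(r,n) that is acting at (r,n) believes φ there, then C^a_S φ holds at all
points. -/
theorem general_necessity
    {Run Agent : Type} (S : Run → ℕ → Set Agent)
    (ACT : Agent → Run → ℕ → Prop)
    (B : Agent → Run × ℕ → Run × ℕ → Prop)
    (φ : Run × ℕ → Prop)
    (h : ∀ (r : Run) (n : ℕ) (i : Agent), i ∈ S r n → ACT i r n →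
      satB B i φ (r, n)) :
    ∀ (r : Run) (n : ℕ), Ca S ACT B φ (r, n) := by
  have key : ∀ k : ℕ, ∀ p : Run × ℕ, EaIter S ACT B (k + 1) φ p := by
    intro k
    induction k with
    | zero =>
      intro p n' i hi hact
      exact h p.1 n' i hi hact
    | succ k ih =>
      intro p n' i hi hact q hq
      exact ih q
  intro r n k hk
  obtain ⟨k, rfl⟩ := Nat.exists_eq_add_of_le hk
  rw [Nat.add_comm]; exact key k (r, n)
end

section
/- Combined characterization (equivalence form of Theorems 3 and 4): For any formula (set of points) φ, the following are equivalent: (i) (M,r,n) ⊨ C^a_S φ for all points (r,n); (ii) for all points (r,n) and all agents i ∈ S(r,n), if ACTING_{i,S} holds at (r,n) then (M,r,n) ⊨ B_i φ. -/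
/-- Combined characterization: C^a_S φ holds at all points iff at every point
each acting group member believes φ. -/
theorem action_stamped_common_belief_characterization
    {Run Agent : Type} (S : Run → ℕ → Set Agent)
    (ACT : Agent → Run → ℕ → Prop)
    (B : Agent → Run × ℕ → Run × ℕ → Prop)
    (φ : Run × ℕ → Prop) :
    (∀ (r : Run) (n : ℕ), Ca S ACT B φ (r, n)) ↔
      (∀ (r : Run) (n : ℕ) (i : Agent), i ∈ S r n → ACT i r n →
        satB B i φ (r, n)) := by
  constructor
  · intro h r n i hi hact
    exact h r n 1 le_rfl n i hi hact
  · intro h r n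
    have key : ∀ k, ∀ (r : Run) (n : ℕ), EaIter S ACT B k φ (r, n) ∨ k = 0 := by
      intro k
      induction k with
      | zero => intro r n; exact Or.inr rfl
      | succ k ih =>
        intro r n
        left
        intro n' i hi hact q hq
        rcases ih q.1 q.2 with h' | h'
        · exact h'
        · subst h'
          exact h r n' i hi hact q hq
    intro k hk
    rcases key k r n with h' | h'
    · exact h'
    · omega
end

section
/- Time-stamped common belief is a special case of action-stamped common belief: given a group G of agents and a time-stamping function t, define the predicate ACTING_{i,G} to hold at a point (r,n) if and only if t(i,r) = n. Then for every formula (set of points) φ and every point (r,n): (M,r,n) ⊨ E^t_G φ if and only if (M,r,n) ⊨ E^a_G φ, and (M,r,n) ⊨ C^t_G φ if and only if (M,r,n) ⊨ C^a_G φ, where E^a_G and C^a_G are the action-stamped operators computed with this ACTING predicate (and with the constant indexical group S(r,n) = G). -/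
/- Time-stamped "everyone believes": each i ∈ G believes φ at time t(i,r). -/
def Et {Run Agent : Type} (G : Set Agent) (t : Agent → Run → ℕ)
    (B : Agent → Run × ℕ → Run × ℕ → Prop)
    (φ : Run × ℕ → Prop) : Run × ℕ → Prop :=
  fun p => ∀ i ∈ G, satB B i φ (p.1, t i p.1)

/- `EtIter G t B k φ` is `E^{t,k}_G φ` (with `EtIter ... 0 φ = φ`). -/
def EtIter {Run Agent : Type} (G : Set Agent) (t : Agent → Run → ℕ)
    (B : Agent → Run × ℕ → Run × ℕ → Prop) :
    ℕ → (Run × ℕ → Prop) → (Run × ℕ → Prop)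
  | 0, φ => φ
  | k + 1, φ => Et G t B (EtIter G t B k φ)

/- Time-stamped common belief: `E^{t,k}_G φ` holds for all k ≥ 1. -/
def Ct {Run Agent : Type} (G : Set Agent) (t : Agent → Run → ℕ)
    (B : Agent → Run × ℕ → Run × ℕ → Prop)
    (φ : Run × ℕ → Prop) (p : Run × ℕ) : Prop :=
  ∀ k : ℕ, 1 ≤ k → EtIter G t B k φ p


private lemma EtEa {Run Agent : Type} (G : Set Agent) (t : Agent → Run → ℕ)
    (B : Agent → Run × ℕ → Run × ℕ → Prop) (φ ψ : Run × ℕ → Prop)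
    (h : ∀ q, φ q ↔ ψ q) (p : Run × ℕ) :
    Et G t B φ p ↔ Ea (fun _ _ => G) (fun i r' n' => t i r' = n') B ψ p := by
  constructor
  · intro H n' i hi hact q hq
    subst hact
    exact (h q).1 (H i hi q hq)
  · intro H i hi q hq
    exact (h q).2 (H (t i p.1) i hi rfl q hq)

private lemma iterEq {Run Agent : Type} (G : Set Agent) (t : Agent → Run → ℕ)
    (B : Agent → Run × ℕ → Run × ℕ → Prop) (φ : Run × ℕ → Prop) :
    ∀ k p, EtIter G t B k φ p ↔
      EaIter (fun _ _ => G) (fun i r' n' => t i r' = n') B k φ p := by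
  intro k
  induction k with
  | zero => intro p; rfl
  | succ k ih => intro p; exact EtEa G t B _ _ ih p

/-- Time-stamped common belief is the special case of action-stamped common
belief obtained by taking `ACTING_{i,G}` to hold at `(r,n)` iff `t i r = n`,
with the constant indexical group `G`. -/
theorem time_stamped_special_case_of_action_stamped
    {Run Agent : Type} (G : Set Agent) (t : Agent → Run → ℕ)
    (B : Agent → Run × ℕ → Run × ℕ → Prop)
    (φ : Run × ℕ → Prop) (r : Run) (n : ℕ) :
    (Et G t B φ (r, n) ↔
      Ea (fun _ _ => G) (fun i r' n' => t i r' = n') B φ (r, n)) ∧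
    (Ct G t B φ (r, n) ↔
      Ca (fun _ _ => G) (fun i r' n' => t i r' = n') B φ (r, n)) := by
  constructor
  · exact EtEa G t B φ φ (fun _ => Iff.rfl) (r, n)
  · constructor
    · intro H k hk; exact (iterEq G t B φ k (r,n)).1 (H k hk)
    · intro H k hk; exact (iterEq G t B φ k (r,n)).2 (H k hk)
end

section
/- JB_S holds in a model M if and only if it is action-stamped common belief at every point that everyone does their part, i.e., JB_S holds in M if and only if (M,r,n) ⊨ C^a_S χ_S for all points (r,n). -/
/-- JB_S holds in M iff action-stamped common belief of χ_S holds at every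
point. -/
theorem JB_iff_action_stamped_common_belief
    {Run Agent : Type} (S : Run → ℕ → Set Agent)
    (ACT SHOULD : Agent → Run → ℕ → Prop)
    (B : Agent → Run × ℕ → Run × ℕ → Prop) :
    JB S ACT SHOULD B ↔
      ∀ (r : Run) (n : ℕ), Ca S ACT B (chiS S ACT SHOULD) (r, n) := by
  constructor
  · intro h r n
    have key : ∀ k, 1 ≤ k → ∀ p : Run × ℕ, EaIter S ACT B k (chiS S ACT SHOULD) p := by
      intro k
      induction k with
      | zero => intro h1; omega
      | succ m ih =>
        intro _ p
        rcases Nat.eq_zero_or_pos m with hm | hm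
        · subst hm
          intro n' i hi hact q hq
          exact h p.1 n' i hi hact q hq
        · intro n' i hi hact q hq
          exact ih hm q
    intro k hk
    exact key k hk (r, n)
  · intro h r n i hi hact q hq
    exact h r n 1 le_rfl n i hi hact q hq
end
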